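/- Let n = 25 and let S = (18)(4)(2)(1) be the sequence over Z/25 with x_1 = 18, x_2 = 4, x_3 = 2, x_4 = 1. Then S is a minimal zero-sum sequence with ind(S) = 1, and moreover t(x̄_2 x_4, 25) = t(x̄_1 x_3, 25) while t(x̄_2 x_1, 25) ≠ t(x̄_4 x_3, 25), where x̄ denotes the inverse of x in (Z/25)^*. -/

import Mathlib

/-!
The representatives of `g⁻¹ xᵢ` sum to a multiple of `n` whenever `∑ xᵢ = 0`, and each is
at least `1`, so every `g`-norm of a zero-sum sequence is at least `1`. For `g = 1` the
representatives of `S` are `18, 4, 2, 1`, which sum to `25`, so `ind(S) = 1`. The remaining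
claims are finite computations.
-/

open Finset

/-- The representative of `z : ZMod n` in `{1, ..., n}`. -/
def rep (n : ℕ) (z : ZMod n) : ℕ := if z = 0 then n else z.val

/-- `g` is a generator of the additive group `ZMod n`. -/
def IsAddGenerator (n : ℕ) (g : ZMod n) : Prop := AddSubgroup.zmultiples g = ⊤

/-- `x` is a minimal zero-sum sequence of length 4 over `ZMod n`:
it is a zero-sum sequence, but no proper nontrivial subsequence of it has sum zero. -/
def IsMinZeroSum4 (n : ℕ) (x : Fin 4 → ZMod n) : Prop :=
  (∑ i, x i) = 0 ∧
    ∀ T : Finset (Fin 4), T ≠ ∅ → T ≠ Finset.univ → (∑ i ∈ T, x i) ≠ 0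

/-- The `g`-norm `‖S‖_g = (y₁ + ⋯ + y₄)/n` where `S = (y₁ g)⋯(y₄ g)`, `1 ≤ yᵢ ≤ n`. -/
noncomputable def gNorm (n : ℕ) (g : ZMod n) (x : Fin 4 → ZMod n) : ℝ :=
  (∑ i, (rep n (g⁻¹ * x i) : ℝ)) / n

/-- The index of the sequence `x`: the minimum of the `g`-norms over generators `g`. -/
noncomputable def seqIndex (n : ℕ) (x : Fin 4 → ZMod n) : ℝ :=
  sInf {r : ℝ | ∃ g : ZMod n, IsAddGenerator n g ∧ r = gNorm n g x}

/-- The classical Dedekind sum `s(h, k) = ∑_{r=1}^{k} (r/k)(hr/k − ⌊hr/k⌋ − 1/2)`. -/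
def dedekindS (h : ℤ) (k : ℕ) : ℚ :=
  ∑ r ∈ Finset.Icc 1 k,
    (r : ℚ) / k * ((h : ℚ) * r / k - ⌊(h : ℚ) * r / k⌋ - 1 / 2)

/-- The Dedekind-type sum `t(h, k) = ∑_{1 ≤ r ≤ k, gcd(r,k)=1} (r/k)(hr/k − ⌊hr/k⌋ − 1/2)`. -/
def dedekindT (h : ℤ) (k : ℕ) : ℚ :=
  ∑ r ∈ (Finset.Icc 1 k).filter (fun r => Nat.gcd r k = 1),
    (r : ℚ) / k * ((h : ℚ) * r / k - ⌊(h : ℚ) * r / k⌋ - 1 / 2)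

section Representatives

variable {n : ℕ} [NeZero n]

lemma natCast_rep (z : ZMod n) : (rep n z : ZMod n) = z := by
  unfold rep
  split_ifs with hz
  · rw [ZMod.natCast_self, hz]
  · exact ZMod.natCast_zmod_val z

lemma one_le_rep (z : ZMod n) : 1 ≤ rep n z := by
  unfold rep
  split_ifs with hz
  · exact NeZero.one_le
  · exact Nat.one_le_iff_ne_zero.2 <| (ZMod.val_ne_zero z).2 hz

lemma dvd_sum_rep {x : Fin 4 → ZMod n} (hx : ∑ i, x i = 0) (g : ZMod n) :
    n ∣ ∑ i, rep n (g⁻¹ * x i) := by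
  rw [← ZMod.natCast_eq_zero_iff]
  push_cast [natCast_rep]
  rw [← mul_sum, hx, mul_zero]

lemma one_le_gNorm {x : Fin 4 → ZMod n} (hx : ∑ i, x i = 0) (g : ZMod n) :
    1 ≤ gNorm n g x := by
  have hpos : 0 < ∑ i, rep n (g⁻¹ * x i) :=
    sum_pos (fun i _ => one_le_rep _) univ_nonempty
  have hle : n ≤ ∑ i, rep n (g⁻¹ * x i) := Nat.le_of_dvd hpos (dvd_sum_rep hx g)
  have hn : (0 : ℝ) < n := Nat.cast_pos.2 (NeZero.pos n)
  rw [gNorm, one_le_div hn]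
  exact_mod_cast hle

lemma seqIndex_eq_one_of_gNorm_eq_one {x : Fin 4 → ZMod n} (hx : ∑ i, x i = 0) {g : ZMod n}
    (hg : IsAddGenerator n g) (hg1 : gNorm n g x = 1) : seqIndex n x = 1 :=
  IsLeast.csInf_eq ⟨⟨g, hg, hg1.symm⟩, fun _ ⟨g', _, hr⟩ => hr ▸ one_le_gNorm hx g'⟩

end Representatives

lemma isAddGenerator_one (n : ℕ) : IsAddGenerator n 1 :=
  (AddSubgroup.eq_top_iff' _).2 fun z => by
    obtain ⟨k, rfl⟩ := ZMod.intCast_surjective z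
    exact AddSubgroup.intCast_mem_zmultiples_one k

lemma gNorm_one (n : ℕ) (x : Fin 4 → ZMod n) :
    gNorm n 1 x = ((∑ i, rep n (x i) : ℕ) : ℝ) / n := by
  simp only [gNorm, ZMod.inv_one, one_mul, Nat.cast_sum]

/-- For `n = 25` and `S = (18)(4)(2)(1)` over `ZMod 25`: `S` is a minimal zero-sum
sequence with `ind(S) = 1`; moreover `t(x̄₂x₄, 25) = t(x̄₁x₃, 25)` while
`t(x̄₂x₁, 25) ≠ t(x̄₄x₃, 25)`. -/
theorem example_n25 :
    IsMinZeroSum4 25 ![18, 4, 2, 1] ∧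
      seqIndex 25 ![18, 4, 2, 1] = 1 ∧
      dedekindT ((((4 : ZMod 25)⁻¹ * 1).val : ℤ)) 25 =
        dedekindT ((((18 : ZMod 25)⁻¹ * 2).val : ℤ)) 25 ∧
      dedekindT ((((4 : ZMod 25)⁻¹ * 18).val : ℤ)) 25 ≠
        dedekindT ((((1 : ZMod 25)⁻¹ * 2).val : ℤ)) 25 := by
  have hsum : ∑ i, ![(18 : ZMod 25), 4, 2, 1] i = 0 := by decide
  have hnorm : gNorm 25 1 ![18, 4, 2, 1] = 1 := by
    rw [gNorm_one, show ∑ i, rep 25 (![(18 : ZMod 25), 4, 2, 1] i) = 25 by decide]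
    norm_num
  refine ⟨⟨hsum, by decide⟩,
    seqIndex_eq_one_of_gNorm_eq_one hsum (isAddGenerator_one 25) hnorm, ?_, ?_⟩
  · rw [show ((((4 : ZMod 25)⁻¹ * 1).val : ℤ)) = 19 by decide +kernel,
      show ((((18 : ZMod 25)⁻¹ * 2).val : ℤ)) = 14 by decide +kernel]
    calc dedekindT 19 25 = 9 / 25 := by decide +kernel
      _ = dedekindT 14 25 := by decide +kernel
  · rw [show ((((4 : ZMod 25)⁻¹ * 18).val : ℤ)) = 17 by decide +kernel,
      show ((((1 : ZMod 25)⁻¹ * 2).val : ℤ)) = 2 by decide +kernel]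
    have t17 : dedekindT 17 25 = 2 / 5 := by decide +kernel
    have t2 : dedekindT 2 25 = 4 / 5 := by decide +kernel
    rw [t17, t2]
    norm_num
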